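/- arXiv:2202.05963 — 2 statements merged into one kernel-verified Lean document; each statement's English description precedes it below -/
import Mathlib

section
/- Let v_j^T = β^T v_j^{T−1} + (1−β^T)(ĝ_j^T)² with v_j^{T−1} ≥ 0, β^T ∈ [1 − 1/T, 1), and suppose (ĝ_j^T)² ≥ a(g_j^T)² for some a ∈ (0,1]. If √T·ε^T ≥ √(T−1)·ε^{T−1} > 0, then √((T−1)·v_j^{T−1}) + √(T−1)·ε^{T−1} ≤ √(T·v_j^T) + √T·ε^T − a(T−1)(1−β^T)(g_j^T)² / ( 2β^T ( √(T·v_j^T) + √T·ε^T ) ). -/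
set_option maxHeartbeats 1000000 in
/-- the deterministic key step of the induction in the convex convergence
proof for the RMSProp second-moment recursion. -/
theorem adadps_induction_key_step (T : ℕ) (hT : 1 ≤ T)
    (vprev v ghat g β εprev ε a : ℝ)
    (hvprev : 0 ≤ vprev)
    (hβlb : 1 - 1 / (T : ℝ) ≤ β) (hβub : β < 1)
    (ha0 : 0 < a) (ha1 : a ≤ 1)
    (hghat : a * g ^ 2 ≤ ghat ^ 2)
    (hrec : v = β * vprev + (1 - β) * ghat ^ 2)
    (hεprev : 0 < Real.sqrt ((T : ℝ) - 1) * εprev)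
    (hεmono : Real.sqrt ((T : ℝ) - 1) * εprev ≤ Real.sqrt (T : ℝ) * ε) :
    Real.sqrt (((T : ℝ) - 1) * vprev) + Real.sqrt ((T : ℝ) - 1) * εprev
      ≤ Real.sqrt ((T : ℝ) * v) + Real.sqrt (T : ℝ) * ε
        - a * ((T : ℝ) - 1) * (1 - β) * g ^ 2
            / (2 * β * (Real.sqrt ((T : ℝ) * v) + Real.sqrt (T : ℝ) * ε)) := by
  set t : ℝ := (T : ℝ) with ht
  have hsnn := Real.sqrt_nonneg (t - 1)
  have hs : 0 < Real.sqrt (t - 1) := by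
    rcases hsnn.lt_or_eq with h | h
    · exact h
    · rw [← h] at hεprev; simp at hεprev
  have htm1 : 0 < t - 1 := Real.sqrt_pos.mp hs
  have ht0 : 0 < t := by linarith
  have hβ0 : 0 < β := by
    have : 1 / t < 1 := by rw [div_lt_one ht0]; linarith
    linarith
  have h1β : 0 < 1 - β := by linarith
  have hN : 0 ≤ a * (t - 1) * (1 - β) * g ^ 2 :=
    mul_nonneg (mul_nonneg (mul_nonneg ha0.le htm1.le) h1β.le) (sq_nonneg g)
  have htβ : t - 1 ≤ t * β := by
    have h1t : t * (1 / t) = 1 := by field_simp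
    nlinarith [mul_le_mul_of_nonneg_left hβlb ht0.le]
  have key : β * ((t - 1) * vprev) + a * (t - 1) * (1 - β) * g ^ 2 ≤ β * (t * v) := by
    rw [hrec]
    nlinarith [mul_nonneg hβ0.le hvprev,
      mul_le_mul_of_nonneg_left hghat (mul_nonneg htm1.le h1β.le),
      mul_le_mul_of_nonneg_right htβ (mul_nonneg hβ0.le hvprev),
      mul_le_mul_of_nonneg_right htβ (mul_nonneg h1β.le (sq_nonneg ghat))]
  have hAnn : 0 ≤ (t - 1) * vprev := mul_nonneg htm1.le hvprev
  have htv : 0 ≤ t * v := by nlinarith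
  set A := Real.sqrt ((t - 1) * vprev) with hA
  set B := Real.sqrt (t * v) with hB
  have hA2 : A ^ 2 = (t - 1) * vprev := Real.sq_sqrt hAnn
  have hB2 : B ^ 2 = t * v := Real.sq_sqrt htv
  have hAB : A ≤ B := Real.sqrt_le_sqrt (by nlinarith)
  have hAnn' : 0 ≤ A := Real.sqrt_nonneg _
  have hE : 0 < Real.sqrt t * ε := lt_of_lt_of_le hεprev hεmono
  have hD : 0 < 2 * β * (B + Real.sqrt t * ε) := by
    apply mul_pos (by linarith)
    have := Real.sqrt_nonneg (t * v)
    linarith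
  have keyAB : β * A ^ 2 + a * (t - 1) * (1 - β) * g ^ 2 ≤ β * B ^ 2 := by
    rw [hA2, hB2]; exact key
  set E := Real.sqrt t * ε with hEdef
  set Ep := Real.sqrt (t - 1) * εprev with hEpdef
  have main : a * (t - 1) * (1 - β) * g ^ 2
      / (2 * β * (B + E))
      ≤ (B + E) - (A + Ep) := by
    rw [div_le_iff₀ hD]
    have s1 : a * (t - 1) * (1 - β) * g ^ 2 ≤ β * (B - A) * (B + A) := by
      have : β * (B - A) * (B + A) = β * B ^ 2 - β * A ^ 2 := by ring
      linarith
    have s2 : β * (B + A) ≤ 2 * β * (B + E) := by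
      have p1 : 0 ≤ β * (B - A) := mul_nonneg hβ0.le (sub_nonneg.mpr hAB)
      have p2 : 0 < β * E := mul_pos hβ0 hE
      have : 2 * β * (B + E) - β * (B + A) = β * (B - A) + 2 * (β * E) := by ring
      linarith
    have s3 : β * (B - A) * (B + A) ≤ (B - A) * (2 * β * (B + E)) := by
      have h := mul_le_mul_of_nonneg_left s2 (sub_nonneg.mpr hAB)
      have e1 : (B - A) * (β * (B + A)) = β * (B - A) * (B + A) := by ring
      linarith [e1 ▸ h]
    have s4 : (B - A) * (2 * β * (B + E)) ≤ (B + E - (A + Ep)) * (2 * β * (B + E)) :=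
      mul_le_mul_of_nonneg_right (by linarith) hD.le
    linarith
  linarith
end

section
/- Let v_j^t = β v_j^{t−1} + (1−β)(ĝ_j^t)² with v_j^{t−1} ≥ 0, β ∈ (0,1), ε > 0, and suppose (ĝ_j^t)² ≤ (1/a)(g_j^t)² for some a ∈ (0,1]. Then | g_j^t/(√(v_j^t) + ε) − g_j^t/(√(β v_j^{t−1}) + ε) | ≤ ( √(1−β)/√a ) · (g_j^t)² / ( ( √(β v_j^{t−1}) + ε ) · ε ). -/
/-- coordinatewise perturbation bound for the RMSProp preconditioner
between consecutive iterates, with public-data gradient `ĝ_j^t`. -/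
theorem adadps_preconditioner_perturbation (vprev v ghat g β ε a : ℝ)
    (hvprev : 0 ≤ vprev) (hβ0 : 0 < β) (hβ1 : β < 1) (hε : 0 < ε)
    (ha0 : 0 < a) (ha1 : a ≤ 1)
    (hghat : ghat ^ 2 ≤ (1 / a) * g ^ 2)
    (hrec : v = β * vprev + (1 - β) * ghat ^ 2) :
    |g / (Real.sqrt v + ε) - g / (Real.sqrt (β * vprev) + ε)|
      ≤ (Real.sqrt (1 - β) / Real.sqrt a) * g ^ 2
          / ((Real.sqrt (β * vprev) + ε) * ε) := by
  set s := Real.sqrt (β * vprev) with hs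
  set t := Real.sqrt v with ht
  have hbv : 0 ≤ β * vprev := mul_nonneg hβ0.le hvprev
  have h1β : 0 ≤ 1 - β := by linarith
  have hv0 : 0 ≤ v := by
    rw [hrec]; positivity
  have hs0 : 0 ≤ s := Real.sqrt_nonneg _
  have ht0 : 0 ≤ t := Real.sqrt_nonneg _
  have hssq : s ^ 2 = β * vprev := Real.sq_sqrt hbv
  have htsq : t ^ 2 = v := Real.sq_sqrt hv0
  have hst : s ≤ t := Real.sqrt_le_sqrt (by nlinarith [sq_nonneg ghat])
  have hsε : 0 < s + ε := by linarith
  have htε : 0 < t + ε := by linarith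
  have hdiff : g / (t + ε) - g / (s + ε) = g * (s - t) / ((t + ε) * (s + ε)) := by
    field_simp; ring
  rw [hdiff, abs_div, abs_mul, abs_of_pos (mul_pos htε hsε), abs_sub_comm,
    abs_of_nonneg (by linarith : (0:ℝ) ≤ t - s)]
  have key : |g| * (t - s) ≤ Real.sqrt (1 - β) / Real.sqrt a * g ^ 2 := by
    have hts : t - s ≤ Real.sqrt (1 - β) * |ghat| := by
      have h1 : (t - s) ^ 2 ≤ (1 - β) * ghat ^ 2 := by nlinarith
      calc t - s ≤ Real.sqrt ((t - s) ^ 2) := by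
            rw [Real.sqrt_sq (by linarith)]
        _ ≤ Real.sqrt ((1 - β) * ghat ^ 2) := Real.sqrt_le_sqrt h1
        _ = Real.sqrt (1 - β) * |ghat| := by
            rw [Real.sqrt_mul h1β, Real.sqrt_sq_eq_abs]
    have hga : |ghat| ≤ |g| / Real.sqrt a := by
      have h2 : |ghat| = Real.sqrt (ghat ^ 2) := (Real.sqrt_sq_eq_abs _).symm
      rw [h2, div_eq_mul_inv, ← Real.sqrt_inv, ← Real.sqrt_sq_eq_abs,
        ← Real.sqrt_mul (sq_nonneg g)]
      exact Real.sqrt_le_sqrt (by rw [mul_comm]; rwa [one_div] at hghat)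
    calc |g| * (t - s) ≤ |g| * (Real.sqrt (1 - β) * (|g| / Real.sqrt a)) := by
          apply mul_le_mul_of_nonneg_left _ (abs_nonneg g)
          exact le_trans hts (mul_le_mul_of_nonneg_left hga (Real.sqrt_nonneg _))
      _ = Real.sqrt (1 - β) / Real.sqrt a * g ^ 2 := by
          rw [← sq_abs g]; ring
  have hden : (s + ε) * ε ≤ (t + ε) * (s + ε) := by
    rw [mul_comm (t + ε)]
    exact mul_le_mul_of_nonneg_left (by linarith) hsε.le
  exact div_le_div₀ (by positivity) key (by positivity) hden
end
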